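/- Let X = (m_1,...,m_n) be a sequence of nonnegative integers with m = m_1 + ... + m_n. Then (1/2)·H(X)·m ≤ OPT-ST(X) ≤ 2·(H(X)+1)·m. -/

import Mathlib

/-- A rooted tree (or the empty tree) on a subset `supp` of the vertex type `V`,
represented by parent pointers. -/
structure RTree (V : Type) where
  supp : Finset V
  parent : V → Option V
  parent_eq_none : ∀ v ∉ supp, parent v = none
  mem_of_parent : ∀ {v w : V}, parent v = some w → v ∈ supp ∧ w ∈ supp
  root_unique : ∀ v ∈ supp, ∀ w ∈ supp, parent v = none → parent w = none → v = w
  reaches_root : ∀ v ∈ supp, ∃ r ∈ supp, parent r = none ∧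
    Relation.ReflTransGen (fun a b => parent a = some b) v r

namespace RTree

variable {V : Type}

/-- `T.Anc a v` : `a` is an ancestor of `v` in `T` (possibly `a = v`). -/
def Anc (T : RTree V) (a v : V) : Prop :=
  Relation.ReflTransGen (fun x y => T.parent x = some y) v a

/-- `a` is a strict ancestor of `v`. -/
def StrictAnc (T : RTree V) (a v : V) : Prop := a ≠ v ∧ T.Anc a v

/-- The set of vertices of the subtree rooted at `a` (the descendants of `a`). -/
def descSet (T : RTree V) (a : V) : Set V := {v | T.Anc a v}

/-- The depth of a node: the number of nodes on the path from the root to it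
(the root has depth 1). -/
noncomputable def depth (T : RTree V) (v : V) : ℕ := Set.ncard {a | T.Anc a v}

def IsRoot (T : RTree V) (r : V) : Prop := r ∈ T.supp ∧ T.parent r = none

end RTree

/-- The restriction of a graph to a set of vertices (keeping the ambient vertex type). -/
def restrictG {V : Type} (G : SimpleGraph V) (U : Set V) : SimpleGraph V where
  Adj a b := G.Adj a b ∧ a ∈ U ∧ b ∈ U
  symm := ⟨fun a b ⟨h, ha, hb⟩ => ⟨h.symm, hb, ha⟩⟩
  loopless := ⟨fun a ⟨h, _, _⟩ => G.ne_of_adj h rfl⟩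

/-- `T` is a search tree on the induced subgraph `G[U]`: its nodes are the vertices of `U`,
the subtree of every node induces a connected subgraph, and every edge of `G[U]` joins
two comparable nodes of `T`. -/
def IsSTGOn {V : Type} (G : SimpleGraph V) (U : Finset V) (T : RTree V) : Prop :=
  T.supp = U ∧
  (∀ v ∈ U, ((restrictG G ↑U).induce (T.descSet v)).Connected) ∧
  (∀ u v : V, u ∈ U → v ∈ U → G.Adj u v → T.Anc u v ∨ T.Anc v u)

/-- `T` is a search tree on the graph `G`. -/
def IsSTG {V : Type} [Fintype V] (G : SimpleGraph V) (T : RTree V) : Prop :=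
  IsSTGOn G Finset.univ T

/-- `T'` is obtained from `T` by rotating the edge `(p, c)` of `T`, where `p` is
the parent of `c`: `c` replaces `p` (becoming a child of `p`'s former parent, or the
root if `p` was the root), `p` becomes a child of `c`, `p` keeps its other children,
and each child `x` of `c` whose subtree contains a vertex of `G` adjacent to `p`
becomes a child of `p` (the other children of `c` stay children of `c`). -/
def IsRotationAt {V : Type} (G : SimpleGraph V) (T T' : RTree V) (p c : V) : Prop :=
  T.parent c = some p ∧
  T'.supp = T.supp ∧
  T'.parent c = T.parent p ∧
  T'.parent p = some c ∧
  (∀ x : V, x ≠ p → T.parent x = some c →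
    ((∃ u ∈ T.descSet x, G.Adj u p) → T'.parent x = some p) ∧
    (¬(∃ u ∈ T.descSet x, G.Adj u p) → T'.parent x = some c)) ∧
  (∀ x : V, x ≠ c → x ≠ p → T.parent x ≠ some c → T'.parent x = T.parent x)

/-- `T'` is obtained from `T` by a single rotation. -/
def IsRotation {V : Type} (G : SimpleGraph V) (T T' : RTree V) : Prop :=
  ∃ p c, IsRotationAt G T T' p c

/-- `T2` can be obtained from `T1` by exactly `k` rotations. -/
def ReachesIn {V : Type} (G : SimpleGraph V) : ℕ → RTree V → RTree V → Prop
  | 0, T1, T2 => T1 = T2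
  | k+1, T1, T2 => ∃ T', IsRotation G T1 T' ∧ ReachesIn G k T' T2

/-- Vertex type of the caterpillar `C(m_1, …, m_n)`: spine vertices `inl i` and
leg vertices `inr ⟨i, j⟩`. -/
abbrev CatV (n : ℕ) (m : Fin n → ℕ) : Type := Fin n ⊕ (Σ i : Fin n, Fin (m i))

/-- The caterpillar tree `C(m_1, …, m_n)`: the spine `s_1 - s_2 - ⋯ - s_n` is a path,
and leg `ℓ_{i,j}` is adjacent to `s_i`. -/
def caterpillar (n : ℕ) (m : Fin n → ℕ) : SimpleGraph (CatV n m) where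
  Adj x y :=
    match x, y with
    | Sum.inl i, Sum.inl j => i.val + 1 = j.val ∨ j.val + 1 = i.val
    | Sum.inl i, Sum.inr l => l.1 = i
    | Sum.inr l, Sum.inl i => l.1 = i
    | Sum.inr _, Sum.inr _ => False
  symm := ⟨by rintro (i | l) (j | l') h <;> simp_all <;> tauto⟩
  loopless := ⟨by rintro (i | l) h <;> simp_all⟩

/-- The (base 2) Shannon entropy `H(m_1, …, m_n) = ∑_{i : m_i > 0} (m_i/m) log (m/m_i)`. -/
noncomputable def shannonH {n : ℕ} (m : Fin n → ℕ) : ℝ :=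
  ∑ i, if 0 < m i then
    ((m i : ℝ) / (∑ j, (m j : ℝ))) * Real.logb 2 ((∑ j, (m j : ℝ)) / (m i : ℝ))
  else 0

/-- The parent function of the search tree `A(S, π)` on the caterpillar: the legs form a
path at the top of the tree, ordered bottom-to-top according to `π`, and the spine nodes
hang below, arranged according to the BST `S`. -/
def AParent {n : ℕ} {m : Fin n → ℕ} (S : RTree (Fin n))
    (π : Fin (∑ i, m i) ≃ (Σ i : Fin n, Fin (m i))) :
    CatV n m → Option (CatV n m) :=
  fun x => match x with
  | Sum.inl i =>
      match S.parent i with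
      | some j => some (Sum.inl j)
      | none => if h : 0 < ∑ i, m i then some (Sum.inr (π ⟨0, h⟩)) else none
  | Sum.inr l =>
      if h : (π.symm l).val + 1 < ∑ i, m i then
        some (Sum.inr (π ⟨(π.symm l).val + 1, h⟩))
      else none

/-- `T = A(S, π)`. -/
def IsA {n : ℕ} {m : Fin n → ℕ} (S : RTree (Fin n))
    (π : Fin (∑ i, m i) ≃ (Σ i : Fin n, Fin (m i))) (T : RTree (CatV n m)) : Prop :=
  T.supp = Finset.univ ∧ T.parent = AParent S π

/-- The parent function of the search tree `B(S)` on the caterpillar: every leg `ℓ_{i,j}`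
is a (childless) child of `s_i`, and the spine nodes are arranged according to `S`. -/
def BParent {n : ℕ} {m : Fin n → ℕ} (S : RTree (Fin n)) :
    CatV n m → Option (CatV n m) :=
  fun x => match x with
  | Sum.inl i => (S.parent i).map Sum.inl
  | Sum.inr l => some (Sum.inl l.1)

/-- `T = B(S)`. -/
def IsB {n : ℕ} {m : Fin n → ℕ} (S : RTree (Fin n)) (T : RTree (CatV n m)) : Prop :=
  T.supp = Finset.univ ∧ T.parent = BParent S

/-- `σ(π)`: the sequence of spine indices obtained from the leg ordering `π` by replacing
each leg `ℓ_{i,j}` with `i`. -/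
def sigmaOf {n : ℕ} {m : Fin n → ℕ}
    (π : Fin (∑ i, m i) ≃ (Σ i : Fin n, Fin (m i))) : List (Fin n) :=
  List.ofFn (fun j => (π j).1)

/-- Every leg node of `T` is bound, i.e. no leg node has a child. -/
def noFreeLegs {n : ℕ} {m : Fin n → ℕ} (T : RTree (CatV n m)) : Prop :=
  ∀ (x : CatV n m) (l : Σ i : Fin n, Fin (m i)), T.parent x ≠ some (Sum.inr l)

open Classical in
/-- The number of adjacent pairs in a list satisfying `P`. -/
noncomputable def pairAlt {α : Type} (P : α → α → Prop) : List α → ℕ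
  | [] => 0
  | [_] => 0
  | a :: b :: t => (if P a b then 1 else 0) + pairAlt P (b :: t)

open Classical in
/-- Wilber's quantity `λ(S, u, σ)`: 0 if `u` has at most one child; otherwise the number
of adjacent pairs in the restriction of `σ` to the subtree of `u` that do not both lie in
the subtree of one child of `u` and are not both equal to `u`. -/
noncomputable def wilberLam {n : ℕ} (S : RTree (Fin n)) (u : Fin n) (σ : List (Fin n)) : ℕ :=
  if (∃ v w : Fin n, v ≠ w ∧ S.parent v = some u ∧ S.parent w = some u) then
    pairAlt (fun x y =>
      ¬((x = u ∧ y = u) ∨ ∃ ch, S.parent ch = some u ∧ S.Anc ch x ∧ S.Anc ch y))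
      (σ.filter (fun x => decide (S.Anc u x)))
  else 0

/-- `λ'(S, u, σ) = λ(S, u, σ)` plus the number of occurrences of `u` in `σ`. -/
noncomputable def wilberLam' {n : ℕ} (S : RTree (Fin n)) (u : Fin n)
    (σ : List (Fin n)) : ℕ :=
  wilberLam S u σ + σ.count u

/-- Wilber's first lower bound `Λ'(S, σ) = ∑_u λ'(S, u, σ)`. -/
noncomputable def wilberL' {n : ℕ} (S : RTree (Fin n)) (σ : List (Fin n)) : ℕ :=
  ∑ u : Fin n, wilberLam' S u σ

/-- `P` is the projection `T[U]` of `T` onto `U`: its nodes are the nodes of `T` in `U`,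
and the parent of `u` in `P` is the nearest strict ancestor of `u` in `T` that lies
in `U` (which is exactly the result of pruning the vertices outside `U` one by one). -/
def IsProjOn {V : Type} [DecidableEq V] (T : RTree V) (U : Finset V) (P : RTree V) : Prop :=
  P.supp = T.supp ∩ U ∧
  ∀ u w : V, P.parent u = some w ↔
    (u ∈ U ∧ w ∈ U ∧ T.StrictAnc w u ∧ ∀ z ∈ U, T.StrictAnc z u → T.Anc z w)

/-- `P` is obtained from `T` by pruning the vertex `v`. -/
def IsPruneOf {V : Type} [DecidableEq V] (T : RTree V) (v : V) (P : RTree V) : Prop :=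
  IsProjOn T (T.supp.erase v) P

/-- `PruneSeq T l P`: `P` is obtained from `T` by successively pruning the
vertices in the list `l`, in order. -/
def PruneSeq {V : Type} [DecidableEq V] : RTree V → List V → RTree V → Prop
  | T, [], P => P = T
  | T, v :: rest, P => ∃ P', IsPruneOf T v P' ∧ PruneSeq P' rest P

/-- The number of alternations (edges whose endpoints get different colors under `f`)
on the path from the root to `z`. -/
noncomputable def altAt {V K : Type} (f : V → K) (T : RTree V) (z : V) : ℕ :=
  Set.ncard {x | T.Anc x z ∧ ∃ y, T.parent x = some y ∧ f x ≠ f y}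

/-- The alternation number of `T` w.r.t. the coloring `f`: the maximum number of
alternations on a root-to-node path. -/
noncomputable def altNum {V K : Type} (f : V → K) (T : RTree V) : ℕ :=
  T.supp.sup (fun z => altAt f T z)


/-!
Lower bound: in a search tree on a path every subtree is an interval, so a node has at most one
child on each side. Hence at most `2 ^ (d - 1)` nodes have depth `d`, so `∑ 4 ^ (-depth) ≤ 1`,
and Gibbs' inequality with `q i = 4 ^ (-depth i)` gives `H · m ≤ ∑ m_i log₂ 4 ^ depth i = 2 · cost`.

Upper bound (Mehlhorn's bisection tree): cut `[0, m)` into consecutive cells of lengths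
`m_1, …, m_n` and give key `i` the least `ℓ` for which its cell meets the grid `(m / 2 ^ ℓ) ℕ`;
a cell of length at least `m / 2 ^ ℓ` meets that grid, so `m_i · 2 ^ level i < 2 m`. Take the
Cartesian tree of these levels, ties broken by position. Between two cells of equal level `ℓ` lies
a point of the grid of level `ℓ - 1`, hence a key of smaller level; so the ancestors of `i` have
pairwise distinct levels `≤ level i`, and `depth i ≤ level i + 1 ≤ 2 + log₂ (m / m_i)`.
-/

open Finset SimpleGraph

namespace RTree

variable {V : Type} (T : RTree V)

theorem parent_rightUnique : Relator.RightUnique (fun a b => T.parent a = some b) :=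
  fun _ _ _ h₁ h₂ => Option.some.inj (h₁.symm.trans h₂)

theorem anc_total {a b x : V} (ha : T.Anc a x) (hb : T.Anc b x) : T.Anc a b ∨ T.Anc b a :=
  (Relation.ReflTransGen.total_of_right_unique T.parent_rightUnique ha hb).symm

theorem not_anc_of_parent_eq_some {c v : V} (h : T.parent c = some v) : ¬ T.Anc c v := by
  intro hvc
  -- on a cycle through `c`, everything reachable from `c` leads back to `c`
  have back : ∀ x, Relation.ReflTransGen (fun a b => T.parent a = some b) c x → T.Anc c x := by
    intro x hx
    induction hx with
    | refl => exact .refl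
    | tail _ hyx ih =>
      rcases ih.cases_head with rfl | ⟨y', hy', hy'c⟩
      · exact Option.some.inj (h.symm.trans hyx) ▸ hvc
      · exact Option.some.inj (hy'.symm.trans hyx) ▸ hy'c
  obtain ⟨r, -, hr, hcr⟩ := T.reaches_root c (T.mem_of_parent h).1
  rcases (back r hcr).cases_head with rfl | ⟨_, hr', _⟩
  · simp [h] at hr
  · simp [hr] at hr'

theorem anc_antisymm {a b : V} (hab : T.Anc a b) (hba : T.Anc b a) : a = b := by
  rcases hab.cases_head with rfl | ⟨c, hbc, hca⟩
  · rfl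
  · exact absurd (hca.trans hba) (T.not_anc_of_parent_eq_some hbc)

theorem anc_of_anc_of_parent_eq_some {w c v : V} (hwc : T.Anc w c) (hne : w ≠ c)
    (h : T.parent c = some v) : T.Anc w v := by
  rcases hwc.cases_head with rfl | ⟨v', hv', hv'w⟩
  · exact absurd rfl hne
  · exact Option.some.inj (h.symm.trans hv') ▸ hv'w

theorem depth_eq_one_of_parent_eq_none {v : V} (h : T.parent v = none) : T.depth v = 1 := by
  have : {a | T.Anc a v} = {v} := by
    ext a
    refine ⟨fun hav => ?_, fun hav => hav ▸ .refl⟩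
    rcases hav.cases_head with rfl | ⟨_, h', _⟩
    · rfl
    · simp [h] at h'
  simp [depth, this]

section Finite

variable [Finite V]

theorem depth_eq_succ_of_parent_eq_some {c v : V} (h : T.parent c = some v) :
    T.depth c = T.depth v + 1 := by
  have : {a | T.Anc a c} = insert c {a | T.Anc a v} := by
    ext a
    refine ⟨fun hac => ?_, ?_⟩
    · by_cases hc : a = c
      · exact Or.inl hc
      · exact Or.inr (T.anc_of_anc_of_parent_eq_some hac hc h)
    · rintro (rfl | hav)
      · exact .refl
      · exact .head h hav
  rw [depth, this,
    Set.ncard_insert_of_notMem (s := {a | T.Anc a v}) (T.not_anc_of_parent_eq_some h)]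
  rfl

theorem one_le_depth (v : V) : 1 ≤ T.depth v :=
  (Set.ncard_pos).2 ⟨v, .refl⟩

theorem depth_le_card (v : V) : T.depth v ≤ Nat.card V :=
  Set.ncard_le_card _

end Finite

variable [Fintype V] [DecidableEq V] (hT : T.supp = Finset.univ)
  (hchildren : ∀ v, #{c | T.parent c = some v} ≤ 2)
include hT hchildren

theorem card_depth_eq_le (d : ℕ) : #{v | T.depth v = d + 1} ≤ 2 ^ d := by
  induction d with
  | zero =>
    refine card_le_one.2 fun a ha b hb => ?_
    simp only [mem_filter, mem_univ, true_and] at ha hb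
    have root : ∀ v, T.depth v = 1 → T.parent v = none := fun v hv => by
      cases hp : T.parent v with
      | none => rfl
      | some w => have := T.depth_eq_succ_of_parent_eq_some hp; have := T.one_le_depth w; omega
    exact T.root_unique a (hT ▸ mem_univ a) b (hT ▸ mem_univ b) (root a ha) (root b hb)
  | succ d ih =>
    have hsub : ({v | T.depth v = d + 1 + 1} : Finset V) ⊆
        ({w | T.depth w = d + 1} : Finset V).biUnion fun w => {c | T.parent c = some w} := by
      intro c hc
      simp only [mem_filter, mem_univ, true_and] at hc
      cases hp : T.parent c with
      | none => rw [T.depth_eq_one_of_parent_eq_none hp] at hc; omega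
      | some w =>
        have := T.depth_eq_succ_of_parent_eq_some hp
        exact mem_biUnion.2 ⟨w, by simp; omega, by simp [hp]⟩
    calc #{v | T.depth v = d + 1 + 1}
        ≤ ∑ w with T.depth w = d + 1, #{c | T.parent c = some w} :=
          (card_le_card hsub).trans card_biUnion_le
      _ ≤ #{w | T.depth w = d + 1} * 2 := sum_le_card_nsmul _ _ _ fun w _ => hchildren w
      _ ≤ 2 ^ (d + 1) := by rw [pow_succ]; exact Nat.mul_le_mul_right 2 ih

theorem sum_quarter_pow_depth_le_one : ∑ v, (1 / 4 : ℝ) ^ T.depth v ≤ 1 := by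
  have hlevel : ∀ d, ∑ v with T.depth v - 1 = d, (1 / 4 : ℝ) ^ T.depth v ≤ 1 / 4 * (1 / 2) ^ d := by
    intro d
    have hfiber : filter (fun v => T.depth v - 1 = d) univ =
        filter (fun v => T.depth v = d + 1) univ :=
      filter_congr fun v _ => by have := T.one_le_depth v; omega
    have hhalf : (2 : ℝ) ^ d * (1 / 2) ^ d = 1 := by rw [← mul_pow]; norm_num
    rw [hfiber, sum_congr rfl fun v hv => by rw [(mem_filter.1 hv).2], sum_const, nsmul_eq_mul]
    calc (#{v | T.depth v = d + 1} : ℝ) * (1 / 4) ^ (d + 1) ≤ 2 ^ d * (1 / 4) ^ (d + 1) := by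
          gcongr
          exact_mod_cast T.card_depth_eq_le hT hchildren d
      _ = 1 / 4 * (1 / 2) ^ d := by
          rw [pow_succ, show (1 / 4 : ℝ) = 1 / 2 * (1 / 2) by norm_num, mul_pow]
          linear_combination (1 / 4 * (1 / 2) ^ d) * hhalf
  have hmaps : ∀ v ∈ (univ : Finset V), T.depth v - 1 ∈ range (Nat.card V) := fun v _ => by
    have := T.one_le_depth v; have := T.depth_le_card v; simp only [mem_range]; omega
  rw [← sum_fiberwise_of_maps_to hmaps]
  calc _ ≤ ∑ d ∈ range (Nat.card V), 1 / 4 * (1 / 2 : ℝ) ^ d := sum_le_sum fun d _ => hlevel d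
    _ ≤ 1 := by rw [← mul_sum]; linarith [sum_geometric_two_le (Nat.card V)]

end RTree

theorem restrictG_univ {V : Type} (G : SimpleGraph V) : restrictG G Set.univ = G := by
  ext; simp [restrictG]

section Hasse

variable {α : Type*} [LinearOrder α] {U : Set α}

theorem Set.OrdConnected.induce_hasse (hU : U.OrdConnected) : (hasse α).induce U = hasse U := by
  have hrange : (Set.range (OrderEmbedding.subtype (· ∈ U))).OrdConnected := by simpa using hU
  ext x y
  simp only [comap_adj, Function.Embedding.subtype_apply, hasse_adj]
  rw [← hrange.apply_covBy_apply_iff, ← hrange.apply_covBy_apply_iff]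
  rfl

theorem SimpleGraph.induce_hasse_connected_iff [LocallyFiniteOrder α] :
    ((hasse α).induce U).Connected ↔ U.Nonempty ∧ U.OrdConnected := by
  classical
  refine ⟨fun hU => ⟨Set.nonempty_coe_sort.1 hU.nonempty, ⟨fun x hx y hy z hz => ?_⟩⟩,
    fun ⟨hne, hU⟩ => ?_⟩
  · by_contra hzU
    have hxz : x < z := lt_of_le_of_ne hz.1 fun h => hzU (h ▸ hx)
    obtain ⟨p⟩ := hU.preconnected ⟨x, hx⟩ ⟨y, hy⟩
    obtain ⟨d, -, hd₁, hd₂⟩ :=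
      p.exists_boundary_dart {u | (u : α) < z} hxz (not_lt.2 hz.2)
    simp only [Set.mem_ofPred_eq, not_lt] at hd₁ hd₂
    rcases (hasse_adj.1 d.adj : (d.fst : α) ⋖ d.snd ∨ (d.snd : α) ⋖ d.fst) with h | h
    · exact hzU (le_antisymm (h.ge_of_gt hd₁) hd₂ ▸ d.snd.2)
    · exact absurd (h.lt.trans hd₁) (not_lt.2 hd₂)
  · rw [hU.induce_hasse]
    have := hne.to_subtype
    let := LinearLocallyFiniteOrder.succOrder U
    exact ⟨hasse_preconnected_of_succ U⟩

end Hasse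

namespace IsSTG

variable {n : ℕ} {S : RTree (Fin n)} (hS : IsSTG (pathGraph n) S)
include hS

theorem ordConnected_descSet (v : Fin n) : (S.descSet v).OrdConnected := by
  have := hS.2.1 v (mem_univ v)
  rw [coe_univ, restrictG_univ] at this
  exact (induce_hasse_connected_iff.1 this).2

theorem eq_of_parent_eq_some {c c' v : Fin n} (hc : S.parent c = some v)
    (hc' : S.parent c' = some v) (hcc' : c ≤ c') (hv : v ∉ Set.Icc c c') : c = c' := by
  have hIcc : Set.Icc c c' ⊆ S.descSet v :=
    (hS.ordConnected_descSet v).out (.single hc) (.single hc')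
  -- a walk from `c` to `c'` inside `[c, c']` cannot leave the subtree of `c`: its edges join
  -- comparable nodes, so leaving would pass through the parent `v`, which is not in `[c, c']`
  have hanc : S.Anc c c' := by
    by_contra hnot
    have hcI : c ∈ Set.Icc c c' := Set.left_mem_Icc.2 hcc'
    obtain ⟨p⟩ := (induce_hasse_connected_iff.2 ⟨⟨c, hcI⟩, Set.ordConnected_Icc⟩).preconnected
      ⟨c, hcI⟩ ⟨c', Set.right_mem_Icc.2 hcc'⟩
    obtain ⟨d, -, hd₁, hd₂⟩ := p.exists_boundary_dart {y | S.Anc c y} (.refl : S.Anc c c) hnot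
    simp only [Set.mem_ofPred_eq] at hd₁ hd₂
    rcases hS.2.2 _ _ (mem_univ _) (mem_univ _) d.adj with h | h
    · exact hd₂ (h.trans hd₁)
    · rcases S.anc_total h hd₁ with h' | h'
      · have hne : (d.snd : Fin n) ≠ c := fun he => hd₂ (by rw [he]; exact .refl)
        have := S.anc_antisymm (S.anc_of_anc_of_parent_eq_some h' hne hc) (hIcc d.snd.2)
        exact hv (this ▸ d.snd.2)
      · exact hd₂ h'
  by_contra hne
  exact S.not_anc_of_parent_eq_some hc (S.anc_of_anc_of_parent_eq_some hanc hne hc')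

theorem card_children_le_two (v : Fin n) : #{c | S.parent c = some v} ≤ 2 := by
  have hside : ∀ c₁ c₂, S.parent c₁ = some v → S.parent c₂ = some v → (c₁ < v ↔ c₂ < v) →
      c₁ = c₂ := by
    intro c₁ c₂ h₁ h₂ hside
    have hne : ∀ c, S.parent c = some v → c ≠ v := fun c h hcv =>
      S.not_anc_of_parent_eq_some h (by subst hcv; exact .refl)
    wlog h12 : c₁ ≤ c₂ generalizing c₁ c₂
    · exact (this c₂ c₁ h₂ h₁ hside.symm (le_of_not_ge h12)).symm
    refine hS.eq_of_parent_eq_some h₁ h₂ h12 fun hv => ?_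
    by_cases h : c₂ < v
    · exact absurd hv.2 (not_le.2 h)
    · have hvc₁ : v < c₁ := lt_of_le_of_ne (not_lt.1 (mt hside.1 h)) (hne c₁ h₁).symm
      exact absurd hv.1 (not_le.2 hvc₁)
  rw [← card_filter_add_card_filter_not (· < v)]
  refine add_le_add (card_le_one.2 fun a ha b hb => ?_) (card_le_one.2 fun a ha b hb => ?_) <;>
    simp only [mem_filter, mem_univ, true_and] at ha hb
  · exact hside a b ha.1 hb.1 (iff_of_true ha.2 hb.2)
  · exact hside a b ha.1 hb.1 (iff_of_false ha.2 hb.2)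

end IsSTG

open Real in
theorem sum_mul_log_div_le_sum_mul_log_inv {ι : Type*} (s : Finset ι) (w q : ι → ℝ)
    (hw : ∀ i ∈ s, 0 ≤ w i) (hq : ∀ i ∈ s, 0 < q i) (hq1 : ∑ i ∈ s, q i ≤ 1) :
    ∑ i ∈ s, w i * log ((∑ j ∈ s, w j) / w i) ≤ ∑ i ∈ s, w i * log (q i)⁻¹ := by
  set W := ∑ j ∈ s, w j
  have hW : 0 ≤ W := sum_nonneg hw
  -- termwise `log x ≤ x - 1` at `x = q i * W / w i`
  have hterm : ∀ i ∈ s, w i * log (W / w i) ≤ w i * log (q i)⁻¹ + (q i * W - w i) := by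
    intro i hi
    have hqi := hq i hi
    rcases (hw i hi).eq_or_lt with h0 | hpos
    · rw [← h0]
      simpa using mul_nonneg hqi.le hW
    · have hWpos : 0 < W := hpos.trans_le (single_le_sum hw hi)
      have hsplit : log (W / w i) = log (q i * W / w i) + log (q i)⁻¹ := by
        rw [← log_mul (by positivity) (by positivity)]
        field_simp
      have hlog : w i * log (q i * W / w i) ≤ q i * W - w i := by
        calc w i * log (q i * W / w i) ≤ w i * (q i * W / w i - 1) :=
              mul_le_mul_of_nonneg_left (log_le_sub_one_of_pos (by positivity)) hpos.le
          _ = q i * W - w i := by field_simp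
      rw [hsplit, mul_add]
      linarith
  calc ∑ i ∈ s, w i * log (W / w i)
      ≤ ∑ i ∈ s, (w i * log (q i)⁻¹ + (q i * W - w i)) := sum_le_sum hterm
    _ = ∑ i ∈ s, w i * log (q i)⁻¹ + ((∑ i ∈ s, q i) - 1) * W := by
        rw [sum_add_distrib, sum_sub_distrib, ← sum_mul]; ring
    _ ≤ ∑ i ∈ s, w i * log (q i)⁻¹ := by nlinarith

theorem natCast_le_sum {ι : Type*} [Fintype ι] (m : ι → ℕ) (i : ι) :
    (m i : ℝ) ≤ ∑ j, (m j : ℝ) :=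
  single_le_sum (f := fun j => (m j : ℝ)) (fun j _ => by positivity) (mem_univ i)

theorem shannonH_nonneg {n : ℕ} (m : Fin n → ℕ) : 0 ≤ shannonH m := by
  refine sum_nonneg fun i _ => ?_
  split_ifs with h
  · have hle := natCast_le_sum m i
    exact mul_nonneg (by positivity)
      (Real.logb_nonneg one_lt_two ((one_le_div (by positivity)).2 hle))
  · exact le_rfl

theorem shannonH_mul_sum {n : ℕ} (m : Fin n → ℕ) :
    shannonH m * ((∑ i, m i : ℕ) : ℝ) =
      ∑ i, (m i : ℝ) * Real.logb 2 (((∑ i, m i : ℕ) : ℝ) / m i) := by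
  rw [shannonH, sum_mul]
  push_cast
  refine sum_congr rfl fun i _ => ?_
  split_ifs with h
  · have : (0 : ℝ) < ∑ j, (m j : ℝ) := (Nat.cast_pos.2 h).trans_le (natCast_le_sum m i)
    field_simp
  · simp [Nat.eq_zero_of_not_pos h]

theorem IsSTG.shannonH_mul_le {n : ℕ} {S : RTree (Fin n)} (hS : IsSTG (pathGraph n) S)
    (m : Fin n → ℕ) :
    shannonH m * ((∑ i, m i : ℕ) : ℝ) ≤ 2 * ∑ i, (m i : ℝ) * S.depth i := by
  have hgibbs := sum_mul_log_div_le_sum_mul_log_inv univ (fun i => (m i : ℝ))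
    (fun i => (1 / 4 : ℝ) ^ S.depth i) (fun _ _ => by positivity) (fun _ _ => by positivity)
    (S.sum_quarter_pow_depth_le_one hS.1 hS.card_children_le_two)
  have hlog : ∀ d : ℕ, Real.log ((1 / 4 : ℝ) ^ d)⁻¹ = 2 * d * Real.log 2 := fun d => by
    rw [one_div, inv_pow, inv_inv, Real.log_pow, show (4 : ℝ) = 2 ^ 2 by norm_num,
      Real.log_pow]
    push_cast
    ring
  simp only [hlog] at hgibbs
  rw [shannonH_mul_sum]
  simp only [Real.logb, ← mul_div_assoc, ← sum_div]
  push_cast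
  rw [div_le_iff₀ (Real.log_pos one_lt_two)]
  refine hgibbs.trans_eq ?_
  rw [mul_sum, sum_mul]
  exact sum_congr rfl fun i _ => by ring

section CartesianTree

variable {V : Type} {α : Type*} [LinearOrder V] [LinearOrder α] {r : V → α} {a b x y : V}

variable (r) in
/-- `a` is an ancestor of `x` in the Cartesian tree of the priorities `r`. -/
def IsCartesianAnc (a x : V) : Prop := ∀ y ∈ Set.uIcc a x, r a ≤ r y

namespace IsCartesianAnc

theorem refl (a : V) : IsCartesianAnc r a a := fun y hy => by
  rw [Set.uIcc_self, Set.mem_singleton_iff] at hy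
  rw [hy]

theorem le (h : IsCartesianAnc r a x) : r a ≤ r x := h x Set.right_mem_uIcc

theorem trans (hab : IsCartesianAnc r a b) (hbx : IsCartesianAnc r b x) : IsCartesianAnc r a x :=
  fun y hy =>
    (Set.uIcc_subset_uIcc_union_uIcc hy).elim (hab y) fun hy => hab.le.trans (hbx y hy)

theorem min_le (ha : IsCartesianAnc r a x) (hb : IsCartesianAnc r b x) (hy : y ∈ Set.uIcc a b) :
    min (r a) (r b) ≤ r y := by
  rcases Set.uIcc_subset_uIcc_union_uIcc (b := x) hy with hy | hy
  · exact min_le_of_left_le (ha y hy)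
  · exact min_le_of_right_le (hb y (Set.uIcc_comm x b ▸ hy))

theorem of_le (ha : IsCartesianAnc r a x) (hb : IsCartesianAnc r b x) (hab : r a ≤ r b) :
    IsCartesianAnc r a b :=
  fun _ hy => min_eq_left hab ▸ ha.min_le hb hy

theorem mono (h : IsCartesianAnc r a x) (hy : y ∈ Set.uIcc a x) : IsCartesianAnc r a y :=
  fun z hz => h z (Set.uIcc_subset_uIcc_left hy hz)

theorem or_of_covBy (h : a ⋖ b) : IsCartesianAnc r a b ∨ IsCartesianAnc r b a := by
  have hab : Set.uIcc a b = {a, b} := by rw [Set.uIcc_of_le h.le, h.Icc_eq]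
  rcases le_total (r a) (r b) with h' | h'
  · left
    intro y hy
    rw [hab] at hy
    rcases hy with rfl | rfl <;> simp [h']
  · right
    intro y hy
    rw [Set.uIcc_comm, hab] at hy
    rcases hy with rfl | rfl <;> simp [h']

end IsCartesianAnc

variable (r) in
def IsCartesianParent (a x : V) : Prop :=
  a ≠ x ∧ IsCartesianAnc r a x ∧ ∀ b, b ≠ x → IsCartesianAnc r b x → r b ≤ r a

open Classical in
variable (r) in
noncomputable def cartesianParent (x : V) : Option V :=
  if h : ∃ a, IsCartesianParent r a x then some h.choose else none

theorem cartesianParent_eq_some (hr : Function.Injective r) :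
    cartesianParent r x = some a ↔ IsCartesianParent r a x := by
  unfold cartesianParent
  split_ifs with h
  · refine Option.some_inj.trans ⟨fun he => he ▸ h.choose_spec, fun ha => ?_⟩
    have hc := h.choose_spec
    exact hr (le_antisymm (ha.2.2 _ hc.1 hc.2.1) (hc.2.2 _ ha.1 ha.2.1))
  · exact iff_of_false (by simp) fun ha => h ⟨a, ha⟩

theorem isCartesianAnc_of_reflTransGen (hr : Function.Injective r)
    (h : Relation.ReflTransGen (fun u v => cartesianParent r u = some v) x a) :
    IsCartesianAnc r a x := by
  induction h with
  | refl => exact .refl x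
  | tail _ hbc ih => exact ((cartesianParent_eq_some hr).1 hbc).2.1.trans ih

theorem cartesianParent_eq_none_of_forall_le (hr : Function.Injective r) {g : V}
    (hg : ∀ y, r g ≤ r y) : cartesianParent r g = none := by
  cases hp : cartesianParent r g with
  | none => rfl
  | some p =>
    have hpg := (cartesianParent_eq_some hr).1 hp
    exact absurd (hr (le_antisymm hpg.2.1.le (hg p))) hpg.1

section Finite

variable [Finite V]

theorem exists_isCartesianParent (ha : IsCartesianAnc r a x) (hax : a ≠ x) :
    ∃ p, IsCartesianParent r p x := by
  obtain ⟨p, ⟨hpx, hp⟩, hmax⟩ := Set.exists_max_image {b | b ≠ x ∧ IsCartesianAnc r b x} r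
    (Set.toFinite _) ⟨a, hax, ha⟩
  exact ⟨p, hpx, hp, fun b hbx hb => hmax b ⟨hbx, hb⟩⟩

theorem reflTransGen_cartesianParent (hr : Function.Injective r) (h : IsCartesianAnc r a x) :
    Relation.ReflTransGen (fun u v => cartesianParent r u = some v) x a := by
  have : IsTrans V (fun u v => r u < r v) := ⟨fun _ _ _ => lt_trans⟩
  have : Std.Irrefl (fun u v : V => r u < r v) := ⟨fun _ => lt_irrefl _⟩
  induction x using (Finite.wellFounded_of_trans_of_irrefl fun u v : V => r u < r v).induction
    with | _ x ih
  by_cases hax : a = x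
  · exact hax ▸ .refl
  obtain ⟨p, hp⟩ := exists_isCartesianParent h hax
  exact .head ((cartesianParent_eq_some hr).2 hp)
    (ih p (lt_of_le_of_ne hp.2.1.le (hr.ne hp.1)) (h.of_le hp.2.1 (hp.2.2 a hax h)))

end Finite

variable [Fintype V]

variable (r) in
noncomputable def cartesianTree (hr : Function.Injective r) : RTree V where
  supp := univ
  parent := cartesianParent r
  parent_eq_none v hv := absurd (mem_univ v) hv
  mem_of_parent _ := ⟨mem_univ _, mem_univ _⟩
  root_unique v _ w _ hv hw := by
    have : Nonempty V := ⟨v⟩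
    obtain ⟨g, hg⟩ := Finite.exists_min r
    have hroot : ∀ x, cartesianParent r x = none → x = g := fun x hx => by
      by_contra hne
      obtain ⟨p, hp⟩ := exists_isCartesianParent (fun y _ => hg y : IsCartesianAnc r g x)
        (Ne.symm hne)
      simp [(cartesianParent_eq_some hr).2 hp] at hx
    rw [hroot v hv, hroot w hw]
  reaches_root v _ := by
    have : Nonempty V := ⟨v⟩
    obtain ⟨g, hg⟩ := Finite.exists_min r
    exact ⟨g, mem_univ g, cartesianParent_eq_none_of_forall_le hr hg,
      reflTransGen_cartesianParent hr fun y _ => hg y⟩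

theorem cartesianTree_anc_iff (hr : Function.Injective r) :
    (cartesianTree r hr).Anc a x ↔ IsCartesianAnc r a x :=
  ⟨isCartesianAnc_of_reflTransGen hr, reflTransGen_cartesianParent hr⟩

end CartesianTree

theorem isSTG_cartesianTree {n : ℕ} {α : Type*} [LinearOrder α] {r : Fin n → α}
    (hr : Function.Injective r) : IsSTG (pathGraph n) (cartesianTree r hr) := by
  refine ⟨rfl, fun v _ => ?_, fun u w _ _ huw => ?_⟩
  · rw [coe_univ, restrictG_univ]
    refine induce_hasse_connected_iff.2
      ⟨⟨v, (cartesianTree_anc_iff hr).2 (.refl v)⟩, ⟨fun x hx y hy z hz => ?_⟩⟩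
    simp only [RTree.descSet, Set.mem_ofPred_eq, cartesianTree_anc_iff] at hx hy ⊢
    rcases le_total v z with hvz | hzv
    · exact hy.mono (Set.mem_uIcc_of_le hvz hz.2)
    · exact hx.mono (Set.mem_uIcc_of_ge hz.1 hzv)
  · simp only [cartesianTree_anc_iff]
    rcases hasse_adj.1 huw with h | h
    · exact IsCartesianAnc.or_of_covBy h
    · exact (IsCartesianAnc.or_of_covBy h).symm

theorem Nat.exists_le_lt_succ_of_le_of_lt (f : ℕ → ℕ) {a b t : ℕ} (hab : a ≤ b) (ha : f a ≤ t)
    (hb : t < f (b + 1)) : ∃ c, a ≤ c ∧ c ≤ b ∧ f c ≤ t ∧ t < f (c + 1) := by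
  induction b, hab using Nat.le_induction with
  | base => exact ⟨a, le_rfl, le_rfl, ha, hb⟩
  | succ b hab ih =>
    by_cases h : f (b + 1) ≤ t
    · exact ⟨b + 1, by omega, le_rfl, h, hb⟩
    · obtain ⟨c, h₁, h₂, h₃⟩ := ih (not_le.1 h)
      exact ⟨c, h₁, by omega, h₃⟩

section DyadicLevel

variable (w : ℕ → ℕ) (M : ℕ)

/-- Key `i` owns the cell `[∑_{j<i} w j, ∑_{j≤i} w j)`, and this says that the cell contains a
point of the grid `(M / 2 ^ ℓ) ℕ` (multiplied through by `2 ^ ℓ`). -/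
def HasDyadicPoint (ℓ i : ℕ) : Prop :=
  ∃ k, 2 ^ ℓ * ∑ j ∈ range i, w j ≤ k * M ∧ k * M < 2 ^ ℓ * ∑ j ∈ range (i + 1), w j

open Classical in
noncomputable def dyadicLevel (i : ℕ) : ℕ∞ :=
  if h : ∃ ℓ, HasDyadicPoint w M ℓ i then (Nat.find h : ℕ∞) else ⊤

variable {w M} {ℓ i a a' : ℕ}

theorem hasDyadicPoint_of_le_two_pow_mul (hM : 0 < M) (h : M ≤ 2 ^ ℓ * w i) :
    HasDyadicPoint w M ℓ i := by
  set A := 2 ^ ℓ * ∑ j ∈ range i, w j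
  -- the grid point `⌈A / M⌉ * M` is the first one at or after the left end `A` of the cell
  have hdiv := Nat.div_add_mod' (A + M - 1) M
  have hmod := Nat.mod_lt (A + M - 1) hM
  refine ⟨(A + M - 1) / M, by omega, ?_⟩
  rw [sum_range_succ, mul_add]
  omega

theorem HasDyadicPoint.exists_between (hlt : a < a') (ha : HasDyadicPoint w M (ℓ + 1) a)
    (ha' : HasDyadicPoint w M (ℓ + 1) a') : ∃ b, a ≤ b ∧ b ≤ a' ∧ HasDyadicPoint w M ℓ b := by
  obtain ⟨k, hk₁, hk₂⟩ := ha
  obtain ⟨k', hk'₁, hk'₂⟩ := ha'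
  have hcells : 2 ^ (ℓ + 1) * ∑ j ∈ range (a + 1), w j ≤ 2 ^ (ℓ + 1) * ∑ j ∈ range a', w j :=
    Nat.mul_le_mul_left _ (sum_le_sum_of_subset (range_mono hlt))
  have hkk' : k < k' := Nat.lt_of_mul_lt_mul_right (by omega : k * M < k' * M)
  -- the even multiple `2 j M` of `M` that follows `k M` lies in a cell between `a` and `a'`,
  -- and `j M` is then a point of the coarser grid in that cell
  set j := (k + 1) / 2
  have hj₁ : k * M ≤ 2 * j * M := Nat.mul_le_mul_right M (by omega)
  have hj₂ : 2 * j * M ≤ k' * M := Nat.mul_le_mul_right M (by omega)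
  obtain ⟨b, hab, hba', hb₁, hb₂⟩ := Nat.exists_le_lt_succ_of_le_of_lt
    (fun i => 2 ^ (ℓ + 1) * ∑ j ∈ range i, w j) hlt.le (hk₁.trans hj₁) (hj₂.trans_lt hk'₂)
  refine ⟨b, hab, hba', j, ?_, ?_⟩
  · simp only [pow_succ] at hb₁; linarith
  · simp only [pow_succ] at hb₂; linarith

open Classical in
theorem hasDyadicPoint_of_dyadicLevel_eq (h : dyadicLevel w M i = ℓ) : HasDyadicPoint w M ℓ i := by
  unfold dyadicLevel at h
  split_ifs at h with hex
  · exact Nat.cast_injective h ▸ Nat.find_spec hex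
  · exact absurd h (ENat.top_ne_natCast ℓ)

open Classical in
theorem dyadicLevel_le (h : HasDyadicPoint w M ℓ i) : dyadicLevel w M i ≤ ℓ := by
  have hex : ∃ ℓ, HasDyadicPoint w M ℓ i := ⟨ℓ, h⟩
  rw [dyadicLevel, dif_pos hex]
  exact_mod_cast Nat.find_min' hex h

theorem dyadicLevel_ne_top (hM : 0 < M) (hw : 0 < w i) : dyadicLevel w M i ≠ ⊤ :=
  ne_top_of_le_ne_top (ENat.natCast_ne_top M) (dyadicLevel_le (hasDyadicPoint_of_le_two_pow_mul hM
    (Nat.lt_two_pow_self.le.trans (Nat.le_mul_of_pos_right _ hw))))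

theorem mul_two_pow_le_of_dyadicLevel_eq (hM : ∑ j ∈ range (i + 1), w j ≤ M)
    (h : dyadicLevel w M i = ℓ) : w i * 2 ^ ℓ ≤ 2 * M := by
  have hwM : w i ≤ M := (single_le_sum (fun _ _ => Nat.zero_le _) (self_mem_range_succ i)).trans hM
  cases ℓ with
  | zero => simpa using hwM.trans (Nat.le_mul_of_pos_left M two_pos)
  | succ ℓ =>
    rcases (Nat.zero_le M).eq_or_lt with hM0 | hM0
    · simp [← hM0, Nat.le_zero.1 (hM0 ▸ hwM)]
    -- the cell of `i` holds no point of the grid of level `ℓ`, so it is shorter than `M / 2 ^ ℓ`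
    have hcoarse : ¬ HasDyadicPoint w M ℓ i := fun hp => by
      have := dyadicLevel_le hp
      rw [h, Nat.cast_le] at this
      omega
    have := mt (hasDyadicPoint_of_le_two_pow_mul hM0) hcoarse
    rw [pow_succ]
    nlinarith

theorem exists_dyadicLevel_lt (hM : ∑ j ∈ range (a' + 1), w j ≤ M) (hlt : a < a')
    (ha : dyadicLevel w M a = ℓ) (ha' : dyadicLevel w M a' = ℓ) :
    ∃ b, a < b ∧ b < a' ∧ dyadicLevel w M b < ℓ := by
  have hpa := hasDyadicPoint_of_dyadicLevel_eq ha
  have hpa' := hasDyadicPoint_of_dyadicLevel_eq ha'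
  cases ℓ with
  | zero =>
    -- both cells would contain the point `0`
    obtain ⟨k, hk₁, hk₂⟩ := hpa
    obtain ⟨k', hk'₁, hk'₂⟩ := hpa'
    simp only [pow_zero, one_mul] at hk₁ hk₂ hk'₁ hk'₂
    have hcells : ∑ j ∈ range (a + 1), w j ≤ ∑ j ∈ range a', w j :=
      sum_le_sum_of_subset (range_mono hlt)
    have hk' : k' = 0 := by
      have : k' * M < 1 * M := by omega
      exact Nat.lt_one_iff.1 (Nat.lt_of_mul_lt_mul_right this)
    subst hk'
    omega
  | succ ℓ =>
    obtain ⟨b, hab, hba', hb⟩ := hpa.exists_between hlt hpa'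
    have hlevel : dyadicLevel w M b < (ℓ + 1 : ℕ) :=
      (dyadicLevel_le hb).trans_lt (by norm_cast; omega)
    refine ⟨b, lt_of_le_of_ne hab ?_, lt_of_le_of_ne hba' ?_, hlevel⟩ <;>
      rintro rfl <;> simp_all
end DyadicLevel

/-- Mehlhorn's bisection tree. -/
noncomputable def dyadicTree (w : ℕ → ℕ) (M n : ℕ) : RTree (Fin n) :=
  cartesianTree (fun i : Fin n => toLex (dyadicLevel w M i, i))
    fun _ _ h => (Prod.ext_iff.1 (toLex.injective h)).2

variable {w : ℕ → ℕ} {M n : ℕ}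

theorem depth_dyadicTree_le (hM : ∑ j ∈ range n, w j ≤ M) {x : Fin n} {ℓ : ℕ}
    (hx : dyadicLevel w M x = ℓ) : (dyadicTree w M n).depth x ≤ ℓ + 1 := by
  set r := fun i : Fin n => toLex (dyadicLevel w M i, i)
  have hlevel : ∀ a : Fin n, IsCartesianAnc r a x → dyadicLevel w M a ≤ ℓ :=
    fun a ha => hx ▸ Prod.Lex.monotone_fst _ _ ha.le
  have hfin : ∀ a : Fin n, IsCartesianAnc r a x →
      dyadicLevel w M a = (dyadicLevel w M a).toNat := fun a ha =>
    (ENat.natCast_toNat (ne_top_of_le_ne_top (ENat.natCast_ne_top ℓ) (hlevel a ha))).symm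
  -- two ancestors of `x` of equal level would enclose a key of smaller level
  have hne : ∀ a a' : Fin n, IsCartesianAnc r a x → IsCartesianAnc r a' x → a < a' →
      dyadicLevel w M a ≠ dyadicLevel w M a' := by
    intro a a' ha ha' hlt heq
    have hsum : ∑ j ∈ range (a'.val + 1), w j ≤ M :=
      (sum_le_sum_of_subset (range_mono a'.isLt)).trans hM
    obtain ⟨b, hab, hba', hb⟩ :=
      exists_dyadicLevel_lt hsum hlt (hfin a ha) (heq.symm.trans (hfin a ha))
    set b' : Fin n := ⟨b, hba'.trans a'.isLt⟩
    have hra : r b' < r a := Prod.Lex.toLex_lt_toLex.2 (Or.inl ((hfin a ha).symm ▸ hb))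
    have hra' : r b' < r a' := Prod.Lex.toLex_lt_toLex.2 (Or.inl (heq ▸ (hfin a ha).symm ▸ hb))
    have := ha.min_le ha' (Set.mem_uIcc_of_le (x := b') hab.le hba'.le)
    rcases min_le_iff.1 this with h | h
    · exact h.not_gt hra
    · exact h.not_gt hra'
  have hinj : Set.InjOn (fun a : Fin n => (dyadicLevel w M a).toNat)
      {a | IsCartesianAnc r a x} := by
    intro a ha a' ha' heq
    have heq' : dyadicLevel w M a = dyadicLevel w M a' := by
      rw [hfin a ha, hfin a' ha']
      exact congrArg _ heq
    by_contra hne'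
    rcases lt_or_gt_of_ne hne' with h | h
    · exact hne a a' ha ha' h heq'
    · exact hne a' a ha' ha h heq'.symm
  calc (dyadicTree w M n).depth x = {a | IsCartesianAnc r a x}.ncard := by
        simp only [RTree.depth, dyadicTree]
        congr 1
        ext a
        exact cartesianTree_anc_iff _
    _ ≤ (↑(range (ℓ + 1)) : Set ℕ).ncard := Set.ncard_le_ncard_of_injOn _ (fun a ha => by
        simpa [Nat.lt_succ_iff] using ENat.toNat_le_of_le_natCast (hlevel a ha)) hinj
    _ = ℓ + 1 := by simp

theorem mul_two_pow_depth_dyadicTree_le (hM : ∑ j ∈ range n, w j ≤ M) (x : Fin n) :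
    w x * 2 ^ (dyadicTree w M n).depth x ≤ 4 * M := by
  rcases (Nat.zero_le (w x)).eq_or_lt with hw | hw
  · simp [← hw]
  have hcell : ∑ j ∈ range (x.val + 1), w j ≤ M :=
    (sum_le_sum_of_subset (range_mono x.isLt)).trans hM
  have hM0 : 0 < M := hw.trans_le
    ((single_le_sum (fun _ _ => Nat.zero_le _) (self_mem_range_succ x.val)).trans hcell)
  set ℓ := (dyadicLevel w M x).toNat
  have hx : dyadicLevel w M x = ℓ := (ENat.natCast_toNat (dyadicLevel_ne_top hM0 hw)).symm
  calc w x * 2 ^ (dyadicTree w M n).depth x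
      ≤ w x * 2 ^ (ℓ + 1) :=
        Nat.mul_le_mul_left _ (Nat.pow_le_pow_right two_pos (depth_dyadicTree_le hM hx))
    _ = 2 * (w x * 2 ^ ℓ) := by ring
    _ ≤ 4 * M := by linarith [mul_two_pow_le_of_dyadicLevel_eq hcell hx]

theorem natCast_le_two_add_logb {a M d : ℕ} (ha : 0 < a) (h : a * 2 ^ d ≤ 4 * M) :
    (d : ℝ) ≤ 2 + Real.logb 2 (M / a) := by
  have hM : (0 : ℝ) < M := by
    have : 0 < a * 2 ^ d := by positivity
    exact_mod_cast (by omega : 0 < M)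
  have h' : (a : ℝ) * 2 ^ d ≤ 4 * M := by exact_mod_cast h
  rw [← sub_le_iff_le_add', Real.le_logb_iff_rpow_le one_lt_two (by positivity),
    Real.rpow_sub two_pos, Real.rpow_natCast, Real.rpow_two, le_div_iff₀ (by positivity)]
  linarith

theorem exists_isSTG_sum_mul_depth_le (m : Fin n → ℕ) :
    ∃ S : RTree (Fin n), IsSTG (pathGraph n) S ∧
      ∑ i, (m i : ℝ) * S.depth i ≤ 2 * (shannonH m + 1) * ((∑ i, m i : ℕ) : ℝ) := by
  set w := Function.extend Fin.val m 0
  have hw : ∀ i : Fin n, w i = m i := Fin.val_injective.extend_apply m 0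
  set M := ∑ i, m i with hMdef
  have hM : ∑ j ∈ range n, w j ≤ M := by
    rw [← Fin.sum_univ_eq_sum_range]
    simp only [hw, hMdef, le_rfl]
  refine ⟨dyadicTree w M n, isSTG_cartesianTree _, ?_⟩
  have hterm : ∀ i, (m i : ℝ) * (dyadicTree w M n).depth i ≤
      2 * m i + m i * Real.logb 2 (M / m i) := by
    intro i
    rcases (Nat.zero_le (m i)).eq_or_lt with h0 | hpos
    · simp [← h0]
    calc (m i : ℝ) * (dyadicTree w M n).depth i
        ≤ m i * (2 + Real.logb 2 (M / m i)) := mul_le_mul_of_nonneg_left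
          (natCast_le_two_add_logb hpos (hw i ▸ mul_two_pow_depth_dyadicTree_le hM i))
          (by positivity)
      _ = 2 * m i + m i * Real.logb 2 (M / m i) := by ring
  calc ∑ i, (m i : ℝ) * (dyadicTree w M n).depth i
      ≤ ∑ i, (2 * (m i : ℝ) + m i * Real.logb 2 (M / m i)) := sum_le_sum fun i _ => hterm i
    _ = 2 * M + shannonH m * M := by
        rw [sum_add_distrib, ← mul_sum, shannonH_mul_sum, hMdef]
        push_cast
        rfl
    _ ≤ 2 * (shannonH m + 1) * M := by
        nlinarith [mul_nonneg (shannonH_nonneg m) (Nat.cast_nonneg (α := ℝ) M)]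

/-- Mehlhorn's bound: `(1/2)·H(X)·m ≤ OPT-ST(X) ≤ 2·(H(X)+1)·m`. -/
theorem opt_static_bst_entropy (n : ℕ) (m : Fin n → ℕ) :
    (∀ S : RTree (Fin n), IsSTG (SimpleGraph.pathGraph n) S →
      (1/2 : ℝ) * shannonH m * ((∑ i, m i : ℕ) : ℝ) ≤
        ∑ i, (m i : ℝ) * (S.depth i : ℝ)) ∧
    (∃ S : RTree (Fin n), IsSTG (SimpleGraph.pathGraph n) S ∧
      ∑ i, (m i : ℝ) * (S.depth i : ℝ) ≤
        2 * (shannonH m + 1) * ((∑ i, m i : ℕ) : ℝ)) :=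
  ⟨fun S hS => by linarith [hS.shannonH_mul_le m], exists_isSTG_sum_mul_depth_le m⟩
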